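/- arXiv:2412.10024 — 3 statements merged into one kernel-verified Lean document; each statement's English description precedes it below -/
import Mathlib

section
/- Consider the single-player test-allocation problem with K ≥ 2 attributes, prior variances Σ⁰_k > 0, budget T > 0, and weights α_k ≥ 0 sorted so that α₁Σ⁰₁ ≥ α₂Σ⁰₂ ≥ … ≥ α_KΣ⁰_K, with α₁ > 0. Define thresholds T̄_k := (Σ_{l=1}^{k−1} α_l)/(α_k Σ⁰_k) − Σ_{l=1}^{k−1} 1/Σ⁰_l for k with α_k > 0, T̄_k := +∞ for k with α_k = 0, and T̄_{K+1} := +∞. Then 0 = T̄₁ ≤ T̄₂ ≤ … ≤ T̄_{K+1}, there is a unique J ∈ {1, …, K} with T̄_J ≤ T < T̄_{J+1}, and the unique minimizer τ* of σ̂²(τ) := Σ_k α_k² Σ⁰_k/(1+τ_kΣ⁰_k) over 𝒯 is given by τ*_k = (T − T̄_J)·α_k/(Σ_{l=1}^{J} α_l) + Σ_{j=k}^{J−1} (T̄_{j+1} − T̄_j)·α_k/(Σ_{l=1}^{j} α_l) for all k ∈ {1,…,J}, and τ*_k = 0 for all k ∈ {J+1,…,K}. -/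
/-!
Lagrangian duality with multiplier `μ` for the budget constraint splits `σ̂²(τ) + μ ∑ τ_k` into
the strictly convex one-dimensional problems `min_{t ≥ 0} α_k² Σ⁰_k / (1 + t Σ⁰_k) + μ t`.
Writing `μ = C⁻²`, their solutions are given by water filling: attribute `k` is tested iff
`α_k Σ⁰_k C ≥ 1`, and then its posterior precision `1 / Σ⁰_k + τ_k` equals `α_k C`.
Because `α_k Σ⁰_k` is decreasing, the tested attributes form an initial segment `{0, …, J}`;
spending the whole budget on it fixes `C`, and `T̄_J ≤ T < T̄_{J+1}` is exactly the condition
`α_J Σ⁰_J C ≥ 1 > α_{J+1} Σ⁰_{J+1} C`. The paper's formula for `τ*_k` telescopes to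
`α_k C - 1 / Σ⁰_k`, and summing the per-coordinate inequalities gives optimality and uniqueness.
-/

noncomputable section

open Finset

theorem exists_le_and_lt_succ {α : Type*} [LinearOrder α] {f : ℕ → α} {x : α} {n : ℕ}
    (h0 : f 0 ≤ x) (hn : x < f n) : ∃ j < n, f j ≤ x ∧ x < f (j + 1) := by
  have hex : ∃ m, x < f m := ⟨n, hn⟩
  obtain ⟨j, hj⟩ : ∃ j, Nat.find hex = j + 1 :=
    Nat.exists_eq_succ_of_ne_zero fun h => (Nat.find_spec hex).not_ge (h ▸ h0)
  have hjn : j < n := by have := Nat.find_le (h := hex) hn; omega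
  exact ⟨j, hjn, not_lt.1 (Nat.find_min hex (by omega)), hj ▸ Nat.find_spec hex⟩

theorem Monotone.le_of_le_of_lt_succ {α : Type*} [Preorder α] {f : ℕ → α} (hf : Monotone f)
    {x : α} {i j : ℕ} (hi : f i ≤ x) (hj : x < f (j + 1)) : i ≤ j := by
  by_contra! h
  exact (hf h).trans hi |>.not_gt hj

theorem antitoneOn_Iio_of_succ_le {α : Type*} [Preorder α] {f : ℕ → α} {K : ℕ}
    (hf : ∀ k, k + 1 < K → f (k + 1) ≤ f k) : AntitoneOn f (Set.Iio K) := by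
  intro k _ m hm hkm
  induction m, hkm using Nat.le_induction with
  | base => exact le_rfl
  | succ m hkm ih => exact (hf m hm).trans (ih (by simp at hm ⊢; omega))

/-- `hkkt` is the KKT condition at `s` for minimizing over `t ≥ 0`, the derivative of
`w * (S / (1 + t * S))` being `-w S² / (1 + t S)²`. -/
theorem lagrangian_term_lt {w S μ s t : ℝ} (hS : 0 < S) (hμ : 0 < μ) (hs : 0 ≤ s) (ht : 0 ≤ t)
    (hkkt : w * S ^ 2 = μ * (1 + s * S) ^ 2 ∨ (s = 0 ∧ w * S ^ 2 < μ)) (hts : t ≠ s) :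
    w * (S / (1 + s * S)) + μ * s < w * (S / (1 + t * S)) + μ * t := by
  have hs' : 0 < 1 + s * S := by positivity
  have ht' : 0 < 1 + t * S := by positivity
  have hdiff : w * (S / (1 + t * S)) + μ * t - (w * (S / (1 + s * S)) + μ * s)
      = (t - s) * (μ * (1 + t * S) * (1 + s * S) - w * S ^ 2) / ((1 + t * S) * (1 + s * S)) := by
    field_simp
    ring
  rw [← sub_pos, hdiff]
  refine div_pos ?_ (by positivity)
  rcases hkkt with hw | ⟨rfl, hw⟩
  · have hsq : (t - s) * (μ * (1 + t * S) * (1 + s * S) - w * S ^ 2)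
        = μ * (1 + s * S) * S * (t - s) ^ 2 := by
      rw [hw]
      ring
    rw [hsq]
    have := sub_ne_zero.2 hts
    positivity
  · have htpos : 0 < t := ht.lt_of_ne' hts
    nlinarith [mul_pos htpos (mul_pos hμ (mul_pos htpos hS)), mul_pos htpos (sub_pos.2 hw)]

section Lagrangian

variable {ι : Type*} {s : Finset ι} {f : ι → ℝ → ℝ} {x y : ι → ℝ} {μ T : ℝ}

theorem sum_lt_of_lagrangian (hμ : 0 ≤ μ) (hx : ∑ i ∈ s, x i = T)
    (hf : ∀ i ∈ s, ∀ t, 0 ≤ t → t ≠ x i → f i (x i) + μ * x i < f i t + μ * t)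
    (hy0 : ∀ i ∈ s, 0 ≤ y i) (hy : ∑ i ∈ s, y i ≤ T) (hne : ∃ i ∈ s, y i ≠ x i) :
    ∑ i ∈ s, f i (x i) < ∑ i ∈ s, f i (y i) := by
  obtain ⟨i, hi, hyx⟩ := hne
  have hL : ∑ i ∈ s, (f i (x i) + μ * x i) < ∑ i ∈ s, (f i (y i) + μ * y i) := by
    refine sum_lt_sum (fun j hj => ?_) ⟨i, hi, hf i hi _ (hy0 i hi) hyx⟩
    rcases eq_or_ne (y j) (x j) with h | h
    · rw [h]
    · exact (hf j hj _ (hy0 j hj) h).le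
  rw [sum_add_distrib, sum_add_distrib, ← mul_sum, ← mul_sum, hx] at hL
  linarith [mul_le_mul_of_nonneg_left hy hμ]

theorem sum_le_of_lagrangian (hμ : 0 ≤ μ) (hx : ∑ i ∈ s, x i = T)
    (hf : ∀ i ∈ s, ∀ t, 0 ≤ t → t ≠ x i → f i (x i) + μ * x i < f i t + μ * t)
    (hy0 : ∀ i ∈ s, 0 ≤ y i) (hy : ∑ i ∈ s, y i ≤ T) :
    ∑ i ∈ s, f i (x i) ≤ ∑ i ∈ s, f i (y i) := by
  by_cases hne : ∃ i ∈ s, y i ≠ x i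
  · exact (sum_lt_of_lagrangian hμ hx hf hy0 hy hne).le
  · push Not at hne
    exact (sum_congr rfl fun i hi => by rw [hne i hi]).le

end Lagrangian

namespace TestAllocation

variable {K J k : ℕ} {S0 a : ℕ → ℝ} {T : ℝ}

def threshold (S0 a : ℕ → ℝ) (k : ℕ) : ℝ :=
  (∑ l ∈ range k, a l) / (a k * S0 k) - ∑ l ∈ range k, 1 / S0 l

def extThreshold (K : ℕ) (S0 a : ℕ → ℝ) (k : ℕ) : EReal :=
  if k < K then (if a k = 0 then ⊤ else (threshold S0 a k : EReal)) else ⊤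

theorem threshold_zero : threshold S0 a 0 = 0 := by
  simp [threshold]

theorem threshold_eq_of_ne (h : a k * S0 k ≠ 0) :
    threshold S0 a k
      = (∑ l ∈ range (k + 1), a l) / (a k * S0 k) - ∑ l ∈ range (k + 1), 1 / S0 l := by
  obtain ⟨ha, hS⟩ := mul_ne_zero_iff.1 h
  rw [threshold, sum_range_succ, sum_range_succ]
  field_simp
  ring

theorem threshold_succ_sub (h : a k * S0 k ≠ 0) :
    threshold S0 a (k + 1) - threshold S0 a k
      = (∑ l ∈ range (k + 1), a l) * (1 / (a (k + 1) * S0 (k + 1)) - 1 / (a k * S0 k)) := by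
  rw [threshold_eq_of_ne h, threshold]
  ring

theorem extThreshold_zero (hK : 0 < K) (ha0 : a 0 ≠ 0) : extThreshold K S0 a 0 = 0 := by
  simp [extThreshold, hK, ha0, threshold_zero]

theorem extThreshold_le_coe_iff {x : ℝ} :
    extThreshold K S0 a k ≤ x ↔ k < K ∧ a k ≠ 0 ∧ threshold S0 a k ≤ x := by
  unfold extThreshold
  split_ifs <;> simp_all

theorem coe_lt_extThreshold_iff {x : ℝ} :
    (x : EReal) < extThreshold K S0 a k ↔ (k < K → a k ≠ 0 → x < threshold S0 a k) := by
  unfold extThreshold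
  split_ifs <;> simp_all

theorem extThreshold_monotone (hS : ∀ k < K, 0 < S0 k) (ha : ∀ k < K, 0 ≤ a k)
    (hsort : ∀ k, k + 1 < K → a (k + 1) * S0 (k + 1) ≤ a k * S0 k) :
    Monotone (extThreshold K S0 a) := by
  refine monotone_nat_of_le_succ fun k => ?_
  by_cases hk1 : k + 1 < K
  swap
  · simp [extThreshold, hk1]
  by_cases ha1 : a (k + 1) = 0
  · simp [extThreshold, ha1]
  have hb1 : 0 < a (k + 1) * S0 (k + 1) := mul_pos ((ha _ hk1).lt_of_ne' ha1) (hS _ hk1)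
  have hb : 0 < a k * S0 k := hb1.trans_le (hsort k hk1)
  have hA : 0 ≤ ∑ l ∈ range (k + 1), a l := sum_nonneg fun l hl => ha l (by simp at hl; omega)
  have hle : threshold S0 a k ≤ threshold S0 a (k + 1) := by
    refine sub_nonneg.1 ?_
    rw [threshold_succ_sub hb.ne']
    exact mul_nonneg hA (sub_nonneg.2 (one_div_le_one_div_of_le hb1 (hsort k hk1)))
  simp [extThreshold, hk1, (by omega : k < K), ha1, left_ne_zero_of_mul hb.ne', hle]

/-- The common value of `(1 / Σ⁰_k + τ*_k) / α_k`, the posterior precision per unit weight, over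
the tested attributes `k ≤ J`. -/
def precisionLevel (S0 a : ℕ → ℝ) (T : ℝ) (J : ℕ) : ℝ :=
  (T + ∑ l ∈ range (J + 1), 1 / S0 l) / ∑ l ∈ range (J + 1), a l

def waterFilling (S0 a : ℕ → ℝ) (T : ℝ) (J : ℕ) (k : ℕ) : ℝ :=
  if k ≤ J then a k * precisionLevel S0 a T J - 1 / S0 k else 0

theorem waterFilling_of_le (hk : k ≤ J) :
    waterFilling S0 a T J k = a k * precisionLevel S0 a T J - 1 / S0 k :=
  if_pos hk

theorem waterFilling_of_lt (hk : J < k) : waterFilling S0 a T J k = 0 :=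
  if_neg (not_le.2 hk)

theorem sum_range_succ_pos (ha : ∀ k < K, 0 ≤ a k) (ha0 : 0 < a 0) (hJK : J < K) :
    0 < ∑ l ∈ range (J + 1), a l :=
  sum_pos' (fun l hl => ha l (by simp at hl; omega)) ⟨0, by simp, ha0⟩

theorem precisionLevel_pos (hS : ∀ k < K, 0 < S0 k) (ha : ∀ k < K, 0 ≤ a k) (ha0 : 0 < a 0)
    (hT : 0 < T) (hJK : J < K) : 0 < precisionLevel S0 a T J := by
  have hH : 0 ≤ ∑ l ∈ range (J + 1), 1 / S0 l :=
    sum_nonneg fun l hl => (one_div_pos.2 (hS l (by simp at hl; omega))).le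
  exact div_pos (by linarith) (sum_range_succ_pos ha ha0 hJK)

theorem threshold_le_iff (hb : 0 < a J * S0 J) (hA : 0 < ∑ l ∈ range (J + 1), a l) :
    threshold S0 a J ≤ T ↔ 1 ≤ a J * S0 J * precisionLevel S0 a T J := by
  rw [threshold_eq_of_ne hb.ne', precisionLevel, sub_le_iff_le_add, div_le_iff₀ hb,
    mul_div_assoc', one_le_div hA, mul_comm]

theorem lt_threshold_succ_iff (hb : 0 < a (J + 1) * S0 (J + 1))
    (hA : 0 < ∑ l ∈ range (J + 1), a l) :
    T < threshold S0 a (J + 1) ↔ a (J + 1) * S0 (J + 1) * precisionLevel S0 a T J < 1 := by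
  rw [threshold, precisionLevel, lt_sub_iff_add_lt, lt_div_iff₀ hb, mul_div_assoc', div_lt_one hA,
    mul_comm]

theorem pos_and_one_le_mul_precisionLevel (hS : ∀ k < K, 0 < S0 k) (ha : ∀ k < K, 0 ≤ a k)
    (hsort : ∀ k, k + 1 < K → a (k + 1) * S0 (k + 1) ≤ a k * S0 k) (ha0 : 0 < a 0)
    (hJ : extThreshold K S0 a J ≤ T) (hk : k ≤ J) :
    0 < a k ∧ 1 ≤ a k * S0 k * precisionLevel S0 a T J := by
  obtain ⟨hJK, haJ, hthr⟩ := extThreshold_le_coe_iff.1 hJ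
  have hbJ : 0 < a J * S0 J := mul_pos ((ha J hJK).lt_of_ne' haJ) (hS J hJK)
  have hbk : a J * S0 J ≤ a k * S0 k :=
    antitoneOn_Iio_of_succ_le (f := fun k => a k * S0 k) hsort (by simp; omega) hJK hk
  have hJC := (threshold_le_iff hbJ (sum_range_succ_pos ha ha0 hJK)).1 hthr
  have hC : 0 < precisionLevel S0 a T J := pos_of_mul_pos_right (by linarith) hbJ.le
  exact ⟨pos_of_mul_pos_left (hbJ.trans_le hbk) (hS k (by omega)).le,
    hJC.trans (mul_le_mul_of_nonneg_right hbk hC.le)⟩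

theorem mul_precisionLevel_lt_one (hS : ∀ k < K, 0 < S0 k) (ha : ∀ k < K, 0 ≤ a k)
    (hsort : ∀ k, k + 1 < K → a (k + 1) * S0 (k + 1) ≤ a k * S0 k) (ha0 : 0 < a 0) (hT : 0 < T)
    (hJK : J < K) (hJ : (T : EReal) < extThreshold K S0 a (J + 1)) (hk : J < k) (hkK : k < K) :
    a k * S0 k * precisionLevel S0 a T J < 1 := by
  have hJ1 : J + 1 < K := by omega
  have hbk : a k * S0 k ≤ a (J + 1) * S0 (J + 1) :=
    antitoneOn_Iio_of_succ_le (f := fun k => a k * S0 k) hsort hJ1 hkK hk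
  have hJ1C : a (J + 1) * S0 (J + 1) * precisionLevel S0 a T J < 1 := by
    rcases (ha _ hJ1).eq_or_lt with h0 | hpos
    · simp [← h0]
    · exact (lt_threshold_succ_iff (mul_pos hpos (hS _ hJ1)) (sum_range_succ_pos ha ha0 hJK)).1
        (coe_lt_extThreshold_iff.1 hJ hJ1 hpos.ne')
  exact (mul_le_mul_of_nonneg_right hbk (precisionLevel_pos hS ha ha0 hT hJK).le).trans_lt hJ1C

theorem one_add_waterFilling_mul (hS : S0 k ≠ 0) (hk : k ≤ J) :
    1 + waterFilling S0 a T J k * S0 k = a k * S0 k * precisionLevel S0 a T J := by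
  rw [waterFilling_of_le hk]
  field_simp
  ring

theorem waterFilling_nonneg (hS : 0 < S0 k)
    (h : k ≤ J → 1 ≤ a k * S0 k * precisionLevel S0 a T J) : 0 ≤ waterFilling S0 a T J k := by
  rcases le_or_gt k J with hk | hk
  · have hxS : 0 ≤ waterFilling S0 a T J k * S0 k := by
      linarith [one_add_waterFilling_mul (a := a) (T := T) hS.ne' hk, h hk]
    exact nonneg_of_mul_nonneg_left hxS hS
  · exact (waterFilling_of_lt hk).ge

theorem sum_waterFilling (hJK : J < K) (hA : ∑ l ∈ range (J + 1), a l ≠ 0) :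
    ∑ k ∈ range K, waterFilling S0 a T J k = T := by
  rw [← sum_range_add_sum_Ico _ (by omega : J + 1 ≤ K),
    sum_eq_zero (s := Ico (J + 1) K) fun k hk => waterFilling_of_lt (by simp at hk; omega),
    add_zero,
    sum_congr rfl fun k hk => waterFilling_of_le (by simp at hk; omega), sum_sub_distrib,
    ← sum_mul, precisionLevel, mul_div_cancel₀ _ hA]
  ring

theorem formula_eq_waterFilling (hS : ∀ k ≤ J, 0 < S0 k) (ha : ∀ k ≤ J, 0 < a k) :
    (fun k => if k ≤ J then
        (T - threshold S0 a J) * a k / (∑ l ∈ range (J + 1), a l)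
          + ∑ j ∈ Ico k J, (threshold S0 a (j + 1) - threshold S0 a j) * a k
              / (∑ l ∈ range (j + 1), a l)
      else 0) = waterFilling S0 a T J := by
  funext k
  rcases le_or_gt k J with hk | hk
  swap
  · rw [if_neg hk.not_ge, waterFilling_of_lt hk]
  have hb : ∀ j ≤ J, a j * S0 j ≠ 0 := fun j hj => (mul_pos (ha j hj) (hS j hj)).ne'
  have hA : ∀ j ≤ J, ∑ l ∈ range (j + 1), a l ≠ 0 := fun j hj =>
    (sum_pos (fun l hl => ha l (by simp at hl; omega)) nonempty_range_add_one).ne'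
  have hstep : ∀ j ∈ Ico k J, (threshold S0 a (j + 1) - threshold S0 a j) * a k
      / (∑ l ∈ range (j + 1), a l) = a k * (1 / (a (j + 1) * S0 (j + 1)) - 1 / (a j * S0 j)) := by
    intro j hj
    have hjJ : j ≤ J := by simp at hj; omega
    rw [threshold_succ_sub (hb j hjJ)]
    field_simp [hA j hjJ]
  have hlast : (T - threshold S0 a J) * a k / (∑ l ∈ range (J + 1), a l)
      = a k * (precisionLevel S0 a T J - 1 / (a J * S0 J)) := by
    rw [threshold_eq_of_ne (hb J le_rfl), precisionLevel]
    field_simp [hA J le_rfl]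
    ring
  rw [if_pos hk, sum_congr rfl hstep, ← mul_sum, sum_Ico_sub (fun j => 1 / (a j * S0 j)) hk,
    hlast, waterFilling_of_le hk]
  field_simp [(ha k hk).ne']
  ring

def varianceTerm (S0 a : ℕ → ℝ) (k : ℕ) (t : ℝ) : ℝ :=
  a k ^ 2 * (S0 k / (1 + t * S0 k))

theorem waterFilling_lagrangian_lt (hS : ∀ k < K, 0 < S0 k) (ha : ∀ k < K, 0 ≤ a k)
    (hsort : ∀ k, k + 1 < K → a (k + 1) * S0 (k + 1) ≤ a k * S0 k) (ha0 : 0 < a 0) (hT : 0 < T)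
    (hJ : extThreshold K S0 a J ≤ T ∧ (T : EReal) < extThreshold K S0 a (J + 1))
    (k : ℕ) (hk : k ∈ range K) (t : ℝ) (ht : 0 ≤ t) (hne : t ≠ waterFilling S0 a T J k) :
    varianceTerm S0 a k (waterFilling S0 a T J k)
        + (precisionLevel S0 a T J ^ 2)⁻¹ * waterFilling S0 a T J k
      < varianceTerm S0 a k t + (precisionLevel S0 a T J ^ 2)⁻¹ * t := by
  have hJK : J < K := (extThreshold_le_coe_iff.1 hJ.1).1
  rw [mem_range] at hk
  have hC := precisionLevel_pos hS ha ha0 hT hJK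
  have hx0 : 0 ≤ waterFilling S0 a T J k := waterFilling_nonneg (hS k hk) fun hkJ =>
    (pos_and_one_le_mul_precisionLevel hS ha hsort ha0 hJ.1 hkJ).2
  refine lagrangian_term_lt (hS k hk) (by positivity) hx0 ht ?_ hne
  rcases le_or_gt k J with hkJ | hkJ
  · left
    rw [one_add_waterFilling_mul (hS k hk).ne' hkJ]
    field_simp
  · right
    refine ⟨waterFilling_of_lt hkJ, ?_⟩
    have hlt := mul_precisionLevel_lt_one hS ha hsort ha0 hT hJK hJ.2 hkJ hk
    have hb : 0 ≤ a k * S0 k := mul_nonneg (ha k hk) (hS k hk).le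
    rw [← one_div, lt_div_iff₀ (by positivity)]
    nlinarith [mul_nonneg hb hC.le]

end TestAllocation

open TestAllocation

/-- Single-player case with general `K ≥ 2` (Theorem 3 of the paper).
Attributes are indexed (0-based) by `k ∈ {0, …, K-1}`; `S0 k` is the prior variance
`Σ⁰_k` and `a k` is the weight `α_k`.  Test allocations are functions `ℕ → ℝ`
that vanish from index `K` onwards.  `Tbar k` (valued in `EReal`, with `⊤` for
`α_k = 0` and for `k = K`, i.e. the (K+1)-st threshold) are the budget thresholds,
and `TbarR` their real values.  The thresholds are sorted starting from `0`, there
is a unique `J` with `T ∈ [T̄_J, T̄_{J+1})`, and the unique minimizer of `σ̂²` over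
`𝒯` is given by the explicit formula. -/
theorem stmt_1
    (K : ℕ) (hK : 2 ≤ K)
    (S0 a : ℕ → ℝ) (T : ℝ)
    (hS : ∀ k < K, 0 < S0 k)
    (ha : ∀ k < K, 0 ≤ a k)
    (hT : 0 < T)
    (hsort : ∀ k, k + 1 < K → a (k + 1) * S0 (k + 1) ≤ a k * S0 k)
    (ha0 : 0 < a 0) :
    let 𝒯 : Set (ℕ → ℝ) := {τ | (∀ k < K, 0 ≤ τ k) ∧ (∀ k, K ≤ k → τ k = 0) ∧
      ∑ k ∈ range K, τ k ≤ T}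
    let σhat2 : (ℕ → ℝ) → ℝ := fun τ => ∑ k ∈ range K, a k ^ 2 * (S0 k / (1 + τ k * S0 k))
    let TbarR : ℕ → ℝ := fun k => (∑ l ∈ range k, a l) / (a k * S0 k) - ∑ l ∈ range k, 1 / S0 l
    let Tbar : ℕ → EReal := fun k =>
      if k < K then (if a k = 0 then ⊤ else ((TbarR k : ℝ) : EReal)) else ⊤
    (Tbar 0 = (0 : EReal)) ∧
    (∀ k < K, Tbar k ≤ Tbar (k + 1)) ∧
    (∃ J < K, (Tbar J ≤ (T : EReal) ∧ (T : EReal) < Tbar (J + 1)) ∧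
      (∀ J' < K, Tbar J' ≤ (T : EReal) ∧ (T : EReal) < Tbar (J' + 1) → J' = J) ∧
      (let τstar : ℕ → ℝ := fun k =>
        if k ≤ J then
          (T - TbarR J) * a k / (∑ l ∈ range (J + 1), a l)
            + ∑ j ∈ Finset.Ico k J,
                (TbarR (j + 1) - TbarR j) * a k / (∑ l ∈ range (j + 1), a l)
        else 0
      τstar ∈ 𝒯 ∧ (∀ τ ∈ 𝒯, σhat2 τstar ≤ σhat2 τ) ∧
        (∀ τ ∈ 𝒯, σhat2 τ = σhat2 τstar → τ = τstar))) := by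
  intro 𝒯 σhat2 TbarR Tbar
  have hmono : Monotone Tbar := extThreshold_monotone hS ha hsort
  have h0 : Tbar 0 = 0 := extThreshold_zero (by omega) ha0.ne'
  have hT0 : Tbar 0 ≤ T := h0.trans_le (by exact_mod_cast hT.le)
  obtain ⟨J, hJK, hJ⟩ := exists_le_and_lt_succ hT0 (show (T : EReal) < Tbar K by simp [Tbar])
  refine ⟨h0, fun k _ => hmono k.le_succ, J, hJK, hJ, fun J' _ hJ' =>
    le_antisymm (hmono.le_of_le_of_lt_succ hJ'.1 hJ.2) (hmono.le_of_le_of_lt_succ hJ.1 hJ'.2), ?_⟩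
  intro τstar
  have hpos := fun k (hk : k ≤ J) => pos_and_one_le_mul_precisionLevel hS ha hsort ha0 hJ.1 hk
  have hτ : τstar = waterFilling S0 a T J :=
    formula_eq_waterFilling (fun k hk => hS k (by omega)) fun k hk => (hpos k hk).1
  have hμ : 0 ≤ (precisionLevel S0 a T J ^ 2)⁻¹ := by positivity
  have hsum := sum_waterFilling (S0 := S0) (T := T) hJK (sum_range_succ_pos ha ha0 hJK).ne'
  have hf := waterFilling_lagrangian_lt hS ha hsort ha0 hT hJ
  rw [hτ]
  refine ⟨⟨fun k hk => waterFilling_nonneg (hS k hk) fun hkJ => (hpos k hkJ).2,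
      fun k hk => waterFilling_of_lt (by omega), hsum.le⟩,
    fun τ hτ => sum_le_of_lagrangian (f := varianceTerm S0 a) hμ hsum hf
      (fun k hk => hτ.1 k (mem_range.1 hk)) hτ.2.2, ?_⟩
  rintro τ ⟨hτ0, hτK, hτT⟩ heq
  funext k
  by_cases hk : k < K
  · by_contra hne
    exact (sum_lt_of_lagrangian (f := varianceTerm S0 a) hμ hsum hf
      (fun k hk => hτ0 k (mem_range.1 hk)) hτT ⟨k, mem_range.2 hk, hne⟩).ne' heq
  · rw [hτK k (not_lt.1 hk), waterFilling_of_lt (by omega)]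
end
end

section
/- In the organization setting, suppose α^D₁, α^D₂ > 0 and fix β > 1/2. Define α̂_k(β,γ) := √(max{λ_k(β,γ), 0}) for k = 1,2 and, whenever α̂₁(β,γ) + α̂₂(β,γ) > 0, τ̃₁(β,γ) := (α̂₁(β,γ)Σ⁰₁ − α̂₂(β,γ)Σ⁰₂)/(Σ⁰₁Σ⁰₂(α̂₁(β,γ) + α̂₂(β,γ))) + α̂₁(β,γ)·T/(α̂₁(β,γ) + α̂₂(β,γ)). Then there exist γ_I(β) < γ_II(β), both in the interior of Γ(β), such that for all γ ∈ Γ(β): τ*(β,γ) = (T, 0) if γ ≤ γ_I(β); τ*(β,γ) = (τ̃₁(β,γ), T − τ̃₁(β,γ)) if γ_I(β) < γ < γ_II(β); and τ*(β,γ) = (0, T) if γ ≥ γ_II(β). Moreover, γ ↦ τ̃₁(β,γ) is strictly decreasing on (γ_I(β), γ_II(β)). -/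
noncomputable section

/-! Organization setting (Section 5.1 of the paper), K = 2.

* `Talloc T` is the set `𝒯` of test allocations with budget `T`.
* `Gam aD1 aD2 β` is the set `Γ(β)` of feasible distortions.
* `lam1, lam2` are the parameters `λ₁(β,γ), λ₂(β,γ)` induced by the analyst's
  weights `α^R(β,γ) = (β α^D₁ − γ α^D₂, β α^D₂ + γ α^D₁)`.
* `Gfun` is the researcher's reduced objective `G_{β,γ}`.
* `IsEqAlloc … τ` says that `τ` is the analyst's equilibrium test allocation:
  `τ = (0,0)` if `λ₁ ≤ 0` and `λ₂ ≤ 0`, and otherwise `τ` is a maximizer of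
  `G_{β,γ}` over `𝒯` (which is in fact unique).
* `VD` is the manager's interim expected equilibrium payoff. -/

/-- The set of test allocations with budget `T`. -/
def Talloc (T : ℝ) : Set (ℝ × ℝ) := {τ | 0 ≤ τ.1 ∧ 0 ≤ τ.2 ∧ τ.1 + τ.2 ≤ T}

/-- The set `Γ(β)` of feasible distortions. -/
def Gam (aD1 aD2 β : ℝ) : Set ℝ := Set.Icc (-(β * aD2 / aD1)) (β * aD1 / aD2)

/-- `λ₁(β,γ)`. -/
def lam1 (aD1 aD2 β γ : ℝ) : ℝ := (2 * β - 1) * aD1 ^ 2 - 2 * γ * aD1 * aD2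

/-- `λ₂(β,γ)`. -/
def lam2 (aD1 aD2 β γ : ℝ) : ℝ := (2 * β - 1) * aD2 ^ 2 + 2 * γ * aD1 * aD2

/-- The researcher's reduced objective `G_{β,γ}(τ) = −λ₁ Σ̂₁(τ₁) − λ₂ Σ̂₂(τ₂)`. -/
def Gfun (S1 S2 aD1 aD2 β γ : ℝ) (τ : ℝ × ℝ) : ℝ :=
  -(lam1 aD1 aD2 β γ) * (S1 / (1 + τ.1 * S1)) - lam2 aD1 aD2 β γ * (S2 / (1 + τ.2 * S2))

/-- `τ` is the analyst's equilibrium test allocation `τ*(β,γ)`. -/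
def IsEqAlloc (S1 S2 T aD1 aD2 β γ : ℝ) (τ : ℝ × ℝ) : Prop :=
  (lam1 aD1 aD2 β γ ≤ 0 ∧ lam2 aD1 aD2 β γ ≤ 0 ∧ τ = (0, 0)) ∨
  (¬(lam1 aD1 aD2 β γ ≤ 0 ∧ lam2 aD1 aD2 β γ ≤ 0) ∧ τ ∈ Talloc T ∧
    ∀ τ' ∈ Talloc T, Gfun S1 S2 aD1 aD2 β γ τ' ≤ Gfun S1 S2 aD1 aD2 β γ τ)

/-- The manager's interim expected equilibrium payoff `V^D`. -/
def VD (S1 S2 aD1 aD2 : ℝ) (τ : ℝ × ℝ) : ℝ :=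
  -(aD1 ^ 2) * (S1 / (1 + τ.1 * S1)) - aD2 ^ 2 * (S2 / (1 + τ.2 * S2))

/-! The objective `G_{β,γ}` is a sum of two one-dimensional terms `-λ S / (1 + t S)`, each
concave as soon as `λ > 0`, so an allocation on the budget line is the unique maximiser as soon as
a common slope `μ ≥ 0` is a strict supergradient of both terms there (Kuhn–Tucker). For `β > 1/2`
we have `λ₁ + λ₂ > 0`, `λ₁` decreasing and `λ₂` increasing in `γ`, so comparing marginal values
`λ S² / (1 + t S)²` at the corners `(T, 0)` and `(0, T)` cuts `Γ(β)` at two distortions `γ_I < γ_II`.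
Between them the marginal values are equalised at `τ̃₁`, obtained from
`α̂₁ S₁ / (1 + τ̃₁ S₁) = α̂₂ S₂ / (1 + (T - τ̃₁) S₂)`; it is an increasing function of
`α̂₁ / (α̂₁ + α̂₂)`, which decreases in `γ`. -/

open Set

def payoff (l S t : ℝ) : ℝ := -l * (S / (1 + t * S))

def marginalPayoff (l S t : ℝ) : ℝ := l * (S / (1 + t * S)) ^ 2

theorem Gfun_eq_payoff_add_payoff (S1 S2 aD1 aD2 β γ : ℝ) (τ : ℝ × ℝ) :
    Gfun S1 S2 aD1 aD2 β γ τ =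
      payoff (lam1 aD1 aD2 β γ) S1 τ.1 + payoff (lam2 aD1 aD2 β γ) S2 τ.2 := by
  simp only [Gfun, payoff]
  ring

section Payoff

variable {l S t t' μ : ℝ}

theorem payoff_sub_tangent (hS : 0 ≤ S) (ht : 0 ≤ t) (ht' : 0 ≤ t') :
    payoff l S t' - (payoff l S t + marginalPayoff l S t * (t' - t)) =
      -(l * S ^ 3 * (t' - t) ^ 2 / ((1 + t * S) ^ 2 * (1 + t' * S))) := by
  unfold payoff marginalPayoff
  field_simp
  ring

theorem payoff_lt_tangent (hl : 0 < l) (hS : 0 < S) (ht : 0 ≤ t) (ht' : 0 ≤ t') (hne : t' ≠ t) :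
    payoff l S t' < payoff l S t + marginalPayoff l S t * (t' - t) := by
  have hsq : 0 < (t' - t) ^ 2 := pow_two_pos_of_ne_zero (sub_ne_zero.2 hne)
  have hgap : 0 < l * S ^ 3 * (t' - t) ^ 2 / ((1 + t * S) ^ 2 * (1 + t' * S)) := by positivity
  linarith [payoff_sub_tangent (l := l) hS.le ht ht']

theorem payoff_le_payoff_zero (hl : l ≤ 0) (hS : 0 < S) (ht : 0 ≤ t) :
    payoff l S t ≤ payoff l S 0 := by
  unfold payoff
  refine mul_le_mul_of_nonneg_left ?_ (neg_nonneg.2 hl)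
  rw [zero_mul, add_zero, div_le_iff₀ (by positivity)]
  nlinarith [mul_nonneg ht hS.le]

theorem payoff_lt_payoff_zero_add (hS : 0 < S) (hμ : 0 < μ) (hlμ : l * S ^ 2 ≤ μ) (ht : 0 < t) :
    payoff l S t < payoff l S 0 + μ * t := by
  rcases le_or_gt l 0 with hl | hl
  · linarith [payoff_le_payoff_zero hl hS ht.le, mul_pos hμ ht]
  · have hm : marginalPayoff l S 0 = l * S ^ 2 := by simp [marginalPayoff]
    have htangent := payoff_lt_tangent hl hS le_rfl ht.le ht.ne'
    rw [hm, sub_zero] at htangent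
    linarith [mul_le_mul_of_nonneg_right hlμ ht.le]

end Payoff

theorem add_lt_add_of_strict_supergradient {g₁ g₂ : ℝ → ℝ} {T t₁ t₂ μ : ℝ} (hμ : 0 ≤ μ)
    (ht : t₁ + t₂ = T)
    (h₁ : ∀ x, 0 ≤ x → x ≤ T → x ≠ t₁ → g₁ x < g₁ t₁ + μ * (x - t₁))
    (h₂ : ∀ y, 0 ≤ y → y ≤ T → y ≠ t₂ → g₂ y < g₂ t₂ + μ * (y - t₂)) :
    ∀ τ ∈ Talloc T, τ ≠ (t₁, t₂) → g₁ τ.1 + g₂ τ.2 < g₁ t₁ + g₂ t₂ := by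
  rintro ⟨x, y⟩ ⟨hx, hy, hxy⟩ hne
  have hbudget : μ * (x - t₁) + μ * (y - t₂) ≤ 0 := by nlinarith
  rcases eq_or_ne x t₁ with rfl | hx₁
  · have hy₂ : y ≠ t₂ := fun h => hne (by rw [h])
    linarith [h₂ y hy (by linarith) hy₂]
  · have hy' : g₂ y ≤ g₂ t₂ + μ * (y - t₂) := by
      rcases eq_or_ne y t₂ with rfl | hy₂
      · simp
      · exact (h₂ y hy (by linarith) hy₂).le
    linarith [h₁ x hx (by linarith) hx₁]

section TwoPayoffs

variable {l₁ l₂ S₁ S₂ T : ℝ}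

theorem payoff_add_payoff_lt_of_T_zero (hS₁ : 0 < S₁) (hS₂ : 0 < S₂) (hT : 0 ≤ T)
    (hl₁ : 0 < l₁) (hle : l₂ * S₂ ^ 2 ≤ marginalPayoff l₁ S₁ T) :
    ∀ τ ∈ Talloc T, τ ≠ (T, 0) →
      payoff l₁ S₁ τ.1 + payoff l₂ S₂ τ.2 < payoff l₁ S₁ T + payoff l₂ S₂ 0 := by
  have hμ : 0 < marginalPayoff l₁ S₁ T := by unfold marginalPayoff; positivity
  refine add_lt_add_of_strict_supergradient hμ.le (add_zero T)
    (fun x hx _ hne => payoff_lt_tangent hl₁ hS₁ hT hx hne) fun y hy _ hne => ?_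
  rw [sub_zero]
  exact payoff_lt_payoff_zero_add hS₂ hμ hle (lt_of_le_of_ne hy hne.symm)

theorem payoff_add_payoff_lt_of_zero_T (hS₁ : 0 < S₁) (hS₂ : 0 < S₂) (hT : 0 ≤ T)
    (hl₂ : 0 < l₂) (hle : l₁ * S₁ ^ 2 ≤ marginalPayoff l₂ S₂ T) :
    ∀ τ ∈ Talloc T, τ ≠ (0, T) →
      payoff l₁ S₁ τ.1 + payoff l₂ S₂ τ.2 < payoff l₁ S₁ 0 + payoff l₂ S₂ T := by
  rintro ⟨x, y⟩ ⟨hx, hy, hxy⟩ hne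
  rw [add_comm, add_comm (payoff l₁ S₁ 0)]
  exact payoff_add_payoff_lt_of_T_zero hS₂ hS₁ hT hl₂ hle (y, x) ⟨hy, hx, by linarith⟩
    fun h => hne (by simp_all)

theorem payoff_add_payoff_lt_of_marginalPayoff_eq {t : ℝ} (hS₁ : 0 < S₁) (hS₂ : 0 < S₂)
    (hl₁ : 0 < l₁) (hl₂ : 0 < l₂) (ht : 0 ≤ t) (htT : t ≤ T)
    (hm : marginalPayoff l₁ S₁ t = marginalPayoff l₂ S₂ (T - t)) :
    ∀ τ ∈ Talloc T, τ ≠ (t, T - t) →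
      payoff l₁ S₁ τ.1 + payoff l₂ S₂ τ.2 < payoff l₁ S₁ t + payoff l₂ S₂ (T - t) := by
  have hμ : 0 ≤ marginalPayoff l₁ S₁ t := by unfold marginalPayoff; positivity
  refine add_lt_add_of_strict_supergradient hμ (add_sub_cancel t T)
    (fun x hx _ hne => payoff_lt_tangent hl₁ hS₁ ht hx hne) fun y hy _ hne => ?_
  rw [hm]
  exact payoff_lt_tangent hl₂ hS₂ (sub_nonneg.2 htT) hy hne

end TwoPayoffs

theorem isEqAlloc_and_unique_of_forall_Gfun_lt {S1 S2 T aD1 aD2 β γ : ℝ} {τ₀ : ℝ × ℝ}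
    (hl : 0 < lam1 aD1 aD2 β γ ∨ 0 < lam2 aD1 aD2 β γ) (hτ₀ : τ₀ ∈ Talloc T)
    (hlt : ∀ τ ∈ Talloc T, τ ≠ τ₀ → Gfun S1 S2 aD1 aD2 β γ τ < Gfun S1 S2 aD1 aD2 β γ τ₀) :
    IsEqAlloc S1 S2 T aD1 aD2 β γ τ₀ ∧ ∀ τ, IsEqAlloc S1 S2 T aD1 aD2 β γ τ → τ = τ₀ := by
  have hnot : ¬(lam1 aD1 aD2 β γ ≤ 0 ∧ lam2 aD1 aD2 β γ ≤ 0) := by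
    rintro ⟨h₁, h₂⟩
    rcases hl with h | h <;> linarith
  refine ⟨Or.inr ⟨hnot, hτ₀, fun τ hτ => ?_⟩, ?_⟩
  · rcases eq_or_ne τ τ₀ with rfl | hne
    · exact le_rfl
    · exact (hlt τ hτ hne).le
  · rintro τ (⟨h₁, h₂, -⟩ | ⟨-, hτ, hmax⟩)
    · exact absurd ⟨h₁, h₂⟩ hnot
    · by_contra hne
      exact (hmax τ₀ hτ₀).not_gt (hlt τ hτ hne)

def switchPoint (aD1 aD2 β p q : ℝ) : ℝ :=
  (2 * β - 1) * (aD1 ^ 2 * p - aD2 ^ 2 * q) / (2 * aD1 * aD2 * (p + q))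

section Distortion

variable {aD1 aD2 β p q γ : ℝ}

theorem lam1_strictAnti (hD1 : 0 < aD1) (hD2 : 0 < aD2) : StrictAnti (lam1 aD1 aD2 β) := by
  intro γ γ' h
  have := mul_lt_mul_of_pos_left h (mul_pos hD1 hD2)
  simp only [lam1]
  linarith

theorem lam2_strictMono (hD1 : 0 < aD1) (hD2 : 0 < aD2) : StrictMono (lam2 aD1 aD2 β) := by
  intro γ γ' h
  have := mul_lt_mul_of_pos_left h (mul_pos hD1 hD2)
  simp only [lam2]
  linarith

theorem lt_of_lam1_pos (hD1 : 0 < aD1) (hD2 : 0 < aD2) (h : 0 < lam1 aD1 aD2 β γ) :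
    γ < β * aD1 / aD2 := by
  rw [lt_div_iff₀ hD2]
  unfold lam1 at h
  nlinarith

theorem lt_of_lam2_pos (hD1 : 0 < aD1) (hD2 : 0 < aD2) (h : 0 < lam2 aD1 aD2 β γ) :
    -(β * aD2 / aD1) < γ := by
  rw [neg_lt, lt_div_iff₀ hD1]
  unfold lam2 at h
  nlinarith

theorem lam1_mul_sub_lam2_mul (hD1 : aD1 ≠ 0) (hD2 : aD2 ≠ 0) (hpq : p + q ≠ 0) :
    lam1 aD1 aD2 β γ * p - lam2 aD1 aD2 β γ * q =
      2 * aD1 * aD2 * (p + q) * (switchPoint aD1 aD2 β p q - γ) := by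
  unfold lam1 lam2 switchPoint
  field_simp
  ring

theorem lam2_mul_le_lam1_mul_iff (hD1 : 0 < aD1) (hD2 : 0 < aD2) (hpq : 0 < p + q) :
    lam2 aD1 aD2 β γ * q ≤ lam1 aD1 aD2 β γ * p ↔ γ ≤ switchPoint aD1 aD2 β p q := by
  rw [← sub_nonneg, lam1_mul_sub_lam2_mul hD1.ne' hD2.ne' hpq.ne',
    mul_nonneg_iff_of_pos_left (by positivity), sub_nonneg]

theorem lam2_mul_lt_lam1_mul_iff (hD1 : 0 < aD1) (hD2 : 0 < aD2) (hpq : 0 < p + q) :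
    lam2 aD1 aD2 β γ * q < lam1 aD1 aD2 β γ * p ↔ γ < switchPoint aD1 aD2 β p q := by
  rw [← sub_pos, lam1_mul_sub_lam2_mul hD1.ne' hD2.ne' hpq.ne',
    mul_pos_iff_of_pos_left (by positivity), sub_pos]

theorem lam1_mul_le_lam2_mul_iff (hD1 : 0 < aD1) (hD2 : 0 < aD2) (hpq : 0 < p + q) :
    lam1 aD1 aD2 β γ * p ≤ lam2 aD1 aD2 β γ * q ↔ switchPoint aD1 aD2 β p q ≤ γ := by
  rw [← not_lt, lam2_mul_lt_lam1_mul_iff hD1 hD2 hpq, not_lt]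

theorem lam1_mul_lt_lam2_mul_iff (hD1 : 0 < aD1) (hD2 : 0 < aD2) (hpq : 0 < p + q) :
    lam1 aD1 aD2 β γ * p < lam2 aD1 aD2 β γ * q ↔ switchPoint aD1 aD2 β p q < γ := by
  rw [← not_le, lam2_mul_le_lam1_mul_iff hD1 hD2 hpq, not_le]

theorem lam1_add_lam2_pos (hD1 : 0 < aD1) (hβ : 1 / 2 < β) :
    0 < lam1 aD1 aD2 β γ + lam2 aD1 aD2 β γ := by
  unfold lam1 lam2
  nlinarith [sq_nonneg aD2, pow_pos hD1 2]

theorem lam1_pos_of_le_switchPoint (hD1 : 0 < aD1) (hD2 : 0 < aD2) (hβ : 1 / 2 < β)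
    (hp : 0 ≤ p) (hq : 0 < q) (hγ : γ ≤ switchPoint aD1 aD2 β p q) : 0 < lam1 aD1 aD2 β γ := by
  have hle := (lam2_mul_le_lam1_mul_iff hD1 hD2 (by linarith)).2 hγ
  have hsum := lam1_add_lam2_pos (aD2 := aD2) (γ := γ) hD1 hβ
  by_contra! h
  have : lam2 aD1 aD2 β γ * q ≤ 0 := hle.trans (mul_nonpos_of_nonpos_of_nonneg h hp)
  linarith [nonpos_of_mul_nonpos_left this hq]

theorem lam2_pos_of_switchPoint_le (hD1 : 0 < aD1) (hD2 : 0 < aD2) (hβ : 1 / 2 < β)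
    (hp : 0 < p) (hq : 0 ≤ q) (hγ : switchPoint aD1 aD2 β p q ≤ γ) : 0 < lam2 aD1 aD2 β γ := by
  have hle := (lam1_mul_le_lam2_mul_iff hD1 hD2 (by linarith)).2 hγ
  have hsum := lam1_add_lam2_pos (aD2 := aD2) (γ := γ) hD1 hβ
  by_contra! h
  have : lam1 aD1 aD2 β γ * p ≤ 0 := hle.trans (mul_nonpos_of_nonpos_of_nonneg h hq)
  linarith [nonpos_of_mul_nonpos_left this hp]

theorem switchPoint_mem_interior_Gam (hD1 : 0 < aD1) (hD2 : 0 < aD2) (hβ : 1 / 2 < β)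
    (hp : 0 < p) (hq : 0 < q) : switchPoint aD1 aD2 β p q ∈ interior (Gam aD1 aD2 β) := by
  rw [Gam, interior_Icc]
  exact ⟨lt_of_lam2_pos hD1 hD2 (lam2_pos_of_switchPoint_le hD1 hD2 hβ hp hq.le le_rfl),
    lt_of_lam1_pos hD1 hD2 (lam1_pos_of_le_switchPoint hD1 hD2 hβ hp.le hq le_rfl)⟩

theorem switchPoint_lt_switchPoint {p' q' : ℝ} (hD1 : 0 < aD1) (hD2 : 0 < aD2) (hβ : 1 / 2 < β)
    (hp : 0 < p) (hq : 0 < q) (hp' : 0 < p') (hq' : 0 < q') (h : p * q' < p' * q) :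
    switchPoint aD1 aD2 β p q < switchPoint aD1 aD2 β p' q' := by
  unfold switchPoint
  rw [div_lt_div_iff₀ (by positivity) (by positivity)]
  have key : (2 * β - 1) * (aD1 ^ 2 * p' - aD2 ^ 2 * q') * (2 * aD1 * aD2 * (p + q)) -
      (2 * β - 1) * (aD1 ^ 2 * p - aD2 ^ 2 * q) * (2 * aD1 * aD2 * (p' + q')) =
      (2 * β - 1) * (2 * aD1 * aD2) * (aD1 ^ 2 + aD2 ^ 2) * (p' * q - p * q') := by ring
  have : 0 < (2 * β - 1) * (2 * aD1 * aD2) * (aD1 ^ 2 + aD2 ^ 2) * (p' * q - p * q') := by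
    have : 0 < 2 * β - 1 := by linarith
    have : 0 < p' * q - p * q' := by linarith
    positivity
  linarith

end Distortion

def alphaHat (l : ℝ) : ℝ := √(max l 0)

theorem alphaHat_pos {l : ℝ} (hl : 0 < l) : 0 < alphaHat l :=
  Real.sqrt_pos.2 (lt_max_of_lt_left hl)

theorem sq_alphaHat {l : ℝ} (hl : 0 ≤ l) : alphaHat l ^ 2 = l := by
  rw [alphaHat, max_eq_left hl, Real.sq_sqrt hl]

theorem alphaHat_lt_alphaHat {l l' : ℝ} (hl : 0 < l) (h : l < l') : alphaHat l < alphaHat l' := by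
  unfold alphaHat
  rw [max_eq_left hl.le, max_eq_left (hl.trans h).le]
  exact Real.sqrt_lt_sqrt hl.le h

def interiorAlloc (S1 S2 T a b : ℝ) : ℝ :=
  (a * S1 - b * S2) / (S1 * S2 * (a + b)) + a * T / (a + b)

section InteriorAlloc

variable {S1 S2 T a b : ℝ}

theorem interiorAlloc_eq_div (hS1 : S1 ≠ 0) (hS2 : S2 ≠ 0) (hab : a + b ≠ 0) :
    interiorAlloc S1 S2 T a b = (a * S1 * (1 + T * S2) - b * S2) / (S1 * S2 * (a + b)) := by
  unfold interiorAlloc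
  field_simp
  ring

theorem sub_interiorAlloc_eq_div (hS1 : S1 ≠ 0) (hS2 : S2 ≠ 0) (hab : a + b ≠ 0) :
    T - interiorAlloc S1 S2 T a b = (b * S2 * (1 + T * S1) - a * S1) / (S1 * S2 * (a + b)) := by
  unfold interiorAlloc
  field_simp
  ring

theorem interiorAlloc_eq_mul_sub (hS1 : S1 ≠ 0) (hS2 : S2 ≠ 0) (hab : a + b ≠ 0) :
    interiorAlloc S1 S2 T a b = a / (a + b) * (1 / S1 + 1 / S2 + T) - 1 / S1 := by
  unfold interiorAlloc
  field_simp
  ring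

theorem interiorAlloc_mem_Ioo (hS1 : 0 < S1) (hS2 : 0 < S2) (hT : 0 ≤ T) (ha : 0 < a) (hb : 0 < b)
    (h₁ : b * (S2 / (1 + T * S2)) < a * S1) (h₂ : a * (S1 / (1 + T * S1)) < b * S2) :
    interiorAlloc S1 S2 T a b ∈ Ioo 0 T := by
  have hden : 0 < S1 * S2 * (a + b) := by positivity
  have hT₁ : 0 < 1 + T * S1 := by positivity
  have hT₂ : 0 < 1 + T * S2 := by positivity
  rw [mul_div_assoc', div_lt_iff₀ hT₂] at h₁
  rw [mul_div_assoc', div_lt_iff₀ hT₁] at h₂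
  constructor
  · rw [interiorAlloc_eq_div hS1.ne' hS2.ne' (by positivity)]
    exact div_pos (by linarith) hden
  · rw [← sub_pos, sub_interiorAlloc_eq_div hS1.ne' hS2.ne' (by positivity)]
    exact div_pos (by linarith) hden

theorem mul_div_one_add_interiorAlloc (hS1 : 0 < S1) (hS2 : 0 < S2) (hT : 0 ≤ T)
    (ha : 0 < a) (hb : 0 < b) :
    a * (S1 / (1 + interiorAlloc S1 S2 T a b * S1)) =
      b * (S2 / (1 + (T - interiorAlloc S1 S2 T a b) * S2)) := by
  have e₁ : 1 + interiorAlloc S1 S2 T a b * S1 = a * (S1 + S2 + S1 * S2 * T) / (S2 * (a + b)) := by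
    rw [interiorAlloc_eq_div hS1.ne' hS2.ne' (by positivity)]
    field_simp
    ring
  have e₂ : 1 + (T - interiorAlloc S1 S2 T a b) * S2 =
      b * (S1 + S2 + S1 * S2 * T) / (S1 * (a + b)) := by
    rw [sub_interiorAlloc_eq_div hS1.ne' hS2.ne' (by positivity)]
    field_simp
    ring
  rw [e₁, e₂]
  field_simp

theorem interiorAlloc_lt_interiorAlloc {a' b' : ℝ} (hS1 : 0 < S1) (hS2 : 0 < S2) (hT : 0 ≤ T)
    (ha' : 0 < a') (hb : 0 < b) (hlt : a' < a) (hlt' : b < b') :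
    interiorAlloc S1 S2 T a' b' < interiorAlloc S1 S2 T a b := by
  rw [interiorAlloc_eq_mul_sub hS1.ne' hS2.ne' (by linarith),
    interiorAlloc_eq_mul_sub hS1.ne' hS2.ne' (by linarith)]
  have hfrac : a' / (a' + b') < a / (a + b) := by
    rw [div_lt_div_iff₀ (by linarith) (by linarith)]
    nlinarith [mul_lt_mul_of_pos_right hlt hb, mul_lt_mul_of_pos_left hlt' (ha'.trans hlt)]
  gcongr

end InteriorAlloc

/- `γ_I` equates the marginal values `λ S² / (1 + t S)²` of the two tests at the corner `(T, 0)`,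
`γ_II` at the corner `(0, T)`. -/
def gammaI (S1 S2 T aD1 aD2 β : ℝ) : ℝ :=
  switchPoint aD1 aD2 β ((S1 / (1 + T * S1)) ^ 2) (S2 ^ 2)

def gammaII (S1 S2 T aD1 aD2 β : ℝ) : ℝ :=
  switchPoint aD1 aD2 β (S1 ^ 2) ((S2 / (1 + T * S2)) ^ 2)

def tildeTau1 (S1 S2 T aD1 aD2 β γ : ℝ) : ℝ :=
  interiorAlloc S1 S2 T (alphaHat (lam1 aD1 aD2 β γ)) (alphaHat (lam2 aD1 aD2 β γ))

section Regimes

variable {S1 S2 T aD1 aD2 β γ : ℝ}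

theorem gammaI_lt_gammaII (hS1 : 0 < S1) (hS2 : 0 < S2) (hT : 0 < T) (hD1 : 0 < aD1)
    (hD2 : 0 < aD2) (hβ : 1 / 2 < β) : gammaI S1 S2 T aD1 aD2 β < gammaII S1 S2 T aD1 aD2 β := by
  have hsq : ∀ S : ℝ, 0 < S → (S / (1 + T * S)) ^ 2 < S ^ 2 := fun S hS =>
    pow_lt_pow_left₀ (div_lt_self hS (lt_add_of_pos_right 1 (mul_pos hT hS))) (by positivity)
      two_ne_zero
  exact switchPoint_lt_switchPoint hD1 hD2 hβ (by positivity) (by positivity) (by positivity)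
    (by positivity) (mul_lt_mul'' (hsq S1 hS1) (hsq S2 hS2) (by positivity) (by positivity))

theorem lam1_pos_and_lam2_pos_of_mem_Ioo (hD1 : 0 < aD1) (hD2 : 0 < aD2) (hβ : 1 / 2 < β)
    (hS1 : 0 < S1) (hS2 : 0 < S2) (hT : 0 ≤ T)
    (hγ : γ ∈ Ioo (gammaI S1 S2 T aD1 aD2 β) (gammaII S1 S2 T aD1 aD2 β)) :
    0 < lam1 aD1 aD2 β γ ∧ 0 < lam2 aD1 aD2 β γ :=
  ⟨lam1_pos_of_le_switchPoint hD1 hD2 hβ (by positivity) (by positivity) hγ.2.le,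
    lam2_pos_of_switchPoint_le hD1 hD2 hβ (by positivity) (by positivity) hγ.1.le⟩

theorem isEqAlloc_T_zero (hS1 : 0 < S1) (hS2 : 0 < S2) (hT : 0 ≤ T) (hD1 : 0 < aD1)
    (hD2 : 0 < aD2) (hβ : 1 / 2 < β) (hγ : γ ≤ gammaI S1 S2 T aD1 aD2 β) :
    IsEqAlloc S1 S2 T aD1 aD2 β γ (T, 0) ∧
      ∀ τ, IsEqAlloc S1 S2 T aD1 aD2 β γ τ → τ = (T, 0) := by
  have hl1 := lam1_pos_of_le_switchPoint hD1 hD2 hβ (by positivity) (by positivity) hγ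
  have hle := (lam2_mul_le_lam1_mul_iff hD1 hD2 (by positivity)).2 hγ
  refine isEqAlloc_and_unique_of_forall_Gfun_lt (Or.inl hl1) ⟨hT, le_rfl, by simp⟩
    fun τ hτ hne => ?_
  simp only [Gfun_eq_payoff_add_payoff]
  exact payoff_add_payoff_lt_of_T_zero hS1 hS2 hT hl1 hle τ hτ hne

theorem isEqAlloc_zero_T (hS1 : 0 < S1) (hS2 : 0 < S2) (hT : 0 ≤ T) (hD1 : 0 < aD1)
    (hD2 : 0 < aD2) (hβ : 1 / 2 < β) (hγ : gammaII S1 S2 T aD1 aD2 β ≤ γ) :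
    IsEqAlloc S1 S2 T aD1 aD2 β γ (0, T) ∧
      ∀ τ, IsEqAlloc S1 S2 T aD1 aD2 β γ τ → τ = (0, T) := by
  have hl2 := lam2_pos_of_switchPoint_le hD1 hD2 hβ (by positivity) (by positivity) hγ
  have hle := (lam1_mul_le_lam2_mul_iff hD1 hD2 (by positivity)).2 hγ
  refine isEqAlloc_and_unique_of_forall_Gfun_lt (Or.inr hl2) ⟨le_rfl, hT, by simp⟩
    fun τ hτ hne => ?_
  simp only [Gfun_eq_payoff_add_payoff]
  exact payoff_add_payoff_lt_of_zero_T hS1 hS2 hT hl2 hle τ hτ hne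

theorem isEqAlloc_tildeTau1 (hS1 : 0 < S1) (hS2 : 0 < S2) (hT : 0 ≤ T) (hD1 : 0 < aD1)
    (hD2 : 0 < aD2) (hβ : 1 / 2 < β)
    (hγ : γ ∈ Ioo (gammaI S1 S2 T aD1 aD2 β) (gammaII S1 S2 T aD1 aD2 β)) :
    IsEqAlloc S1 S2 T aD1 aD2 β γ
        (tildeTau1 S1 S2 T aD1 aD2 β γ, T - tildeTau1 S1 S2 T aD1 aD2 β γ) ∧
      ∀ τ, IsEqAlloc S1 S2 T aD1 aD2 β γ τ →
        τ = (tildeTau1 S1 S2 T aD1 aD2 β γ, T - tildeTau1 S1 S2 T aD1 aD2 β γ) := by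
  obtain ⟨hl1, hl2⟩ := lam1_pos_and_lam2_pos_of_mem_Ioo hD1 hD2 hβ hS1 hS2 hT hγ
  unfold tildeTau1
  set a := alphaHat (lam1 aD1 aD2 β γ)
  set b := alphaHat (lam2 aD1 aD2 β γ)
  have ha : 0 < a := alphaHat_pos hl1
  have hb : 0 < b := alphaHat_pos hl2
  have ha2 : lam1 aD1 aD2 β γ = a ^ 2 := (sq_alphaHat hl1.le).symm
  have hb2 : lam2 aD1 aD2 β γ = b ^ 2 := (sq_alphaHat hl2.le).symm
  have h₁ : b * (S2 / (1 + T * S2)) < a * S1 := by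
    rw [← pow_lt_pow_iff_left₀ (by positivity) (by positivity) two_ne_zero, mul_pow, mul_pow,
      ← ha2, ← hb2]
    exact (lam2_mul_lt_lam1_mul_iff hD1 hD2 (by positivity)).2 hγ.2
  have h₂ : a * (S1 / (1 + T * S1)) < b * S2 := by
    rw [← pow_lt_pow_iff_left₀ (by positivity) (by positivity) two_ne_zero, mul_pow, mul_pow,
      ← ha2, ← hb2]
    exact (lam1_mul_lt_lam2_mul_iff hD1 hD2 (by positivity)).2 hγ.1
  obtain ⟨ht0, htT⟩ := interiorAlloc_mem_Ioo hS1 hS2 hT ha hb h₁ h₂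
  refine isEqAlloc_and_unique_of_forall_Gfun_lt (Or.inl hl1)
    ⟨ht0.le, by linarith, by linarith⟩ fun τ hτ hne => ?_
  simp only [Gfun_eq_payoff_add_payoff, ha2, hb2]
  refine payoff_add_payoff_lt_of_marginalPayoff_eq hS1 hS2 (by positivity) (by positivity)
    ht0.le htT.le ?_ τ hτ hne
  simp only [marginalPayoff, ← mul_pow, mul_div_one_add_interiorAlloc hS1 hS2 hT ha hb]

theorem tildeTau1_strictAntiOn (hS1 : 0 < S1) (hS2 : 0 < S2) (hT : 0 ≤ T) (hD1 : 0 < aD1)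
    (hD2 : 0 < aD2) (hβ : 1 / 2 < β) :
    StrictAntiOn (tildeTau1 S1 S2 T aD1 aD2 β)
      (Ioo (gammaI S1 S2 T aD1 aD2 β) (gammaII S1 S2 T aD1 aD2 β)) := by
  intro γ hγ γ' hγ' hlt
  have hl2 := (lam1_pos_and_lam2_pos_of_mem_Ioo hD1 hD2 hβ hS1 hS2 hT hγ).2
  have hl1' := (lam1_pos_and_lam2_pos_of_mem_Ioo hD1 hD2 hβ hS1 hS2 hT hγ').1
  exact interiorAlloc_lt_interiorAlloc hS1 hS2 hT (alphaHat_pos hl1') (alphaHat_pos hl2)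
    (alphaHat_lt_alphaHat hl1' (lam1_strictAnti hD1 hD2 hlt))
    (alphaHat_lt_alphaHat hl2 (lam2_strictMono hD1 hD2 hlt))

end Regimes

/-- Characterization of the equilibrium test allocation for a
sensitive analyst (`β > 1/2`), Lemma 4 of the paper. -/
theorem stmt_5
    (S1 S2 T aD1 aD2 β : ℝ)
    (hS1 : 0 < S1) (hS2 : 0 < S2) (hT : 0 < T)
    (hD1 : 0 < aD1) (hD2 : 0 < aD2)
    (hβ : 1 / 2 < β) :
    let ahat1 : ℝ → ℝ := fun γ => Real.sqrt (max (lam1 aD1 aD2 β γ) 0)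
    let ahat2 : ℝ → ℝ := fun γ => Real.sqrt (max (lam2 aD1 aD2 β γ) 0)
    let τt1 : ℝ → ℝ := fun γ =>
      (ahat1 γ * S1 - ahat2 γ * S2) / (S1 * S2 * (ahat1 γ + ahat2 γ))
        + ahat1 γ * T / (ahat1 γ + ahat2 γ)
    ∃ γI ∈ interior (Gam aD1 aD2 β), ∃ γII ∈ interior (Gam aD1 aD2 β),
      γI < γII ∧
      (∀ γ ∈ Gam aD1 aD2 β,
        (γ ≤ γI → IsEqAlloc S1 S2 T aD1 aD2 β γ (T, 0) ∧
          ∀ τ, IsEqAlloc S1 S2 T aD1 aD2 β γ τ → τ = (T, 0)) ∧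
        (γI < γ → γ < γII →
          0 < ahat1 γ + ahat2 γ ∧
          IsEqAlloc S1 S2 T aD1 aD2 β γ (τt1 γ, T - τt1 γ) ∧
          ∀ τ, IsEqAlloc S1 S2 T aD1 aD2 β γ τ → τ = (τt1 γ, T - τt1 γ)) ∧
        (γII ≤ γ → IsEqAlloc S1 S2 T aD1 aD2 β γ (0, T) ∧
          ∀ τ, IsEqAlloc S1 S2 T aD1 aD2 β γ τ → τ = (0, T))) ∧
      StrictAntiOn τt1 (Set.Ioo γI γII) := by
  intro ahat1 ahat2 τt1
  refine ⟨gammaI S1 S2 T aD1 aD2 β,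
    switchPoint_mem_interior_Gam hD1 hD2 hβ (by positivity) (by positivity),
    gammaII S1 S2 T aD1 aD2 β,
    switchPoint_mem_interior_Gam hD1 hD2 hβ (by positivity) (by positivity),
    gammaI_lt_gammaII hS1 hS2 hT hD1 hD2 hβ,
    fun γ _ => ⟨fun hγ => ?_, fun hI hII => ?_, fun hγ => ?_⟩,
    tildeTau1_strictAntiOn hS1 hS2 hT.le hD1 hD2 hβ⟩
  · exact isEqAlloc_T_zero hS1 hS2 hT.le hD1 hD2 hβ hγ
  · obtain ⟨hl1, hl2⟩ := lam1_pos_and_lam2_pos_of_mem_Ioo hD1 hD2 hβ hS1 hS2 hT.le ⟨hI, hII⟩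
    exact ⟨add_pos (alphaHat_pos hl1) (alphaHat_pos hl2),
      isEqAlloc_tildeTau1 hS1 hS2 hT.le hD1 hD2 hβ ⟨hI, hII⟩⟩
  · exact isEqAlloc_zero_T hS1 hS2 hT.le hD1 hD2 hβ hγ
end
end

section
/- In the organization setting with α^D₁, α^D₂ > 0, fix a distortion level γ ∈ ℝ. Then the manager's expected equilibrium payoff is weakly increasing in the analyst's sensitivity: for any 0 ≤ β ≤ β' with γ ∈ Γ(β) (hence also γ ∈ Γ(β')), one has V^D(τ*(β', γ)) ≥ V^D(τ*(β, γ)). -/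
noncomputable section

/-! Revealed preference: raising `β` to `β'` adds `2 (β' - β) V^D` to the analyst's objective,
so comparing the two equilibria against each other's objective gives
`(β' - β) (V^D(τ') - V^D(τ)) ≥ 0`. This settles `β < β'`; for `β = β'` one needs that the
maximizer of `G_{β,γ}` is unique, which follows from strict convexity of `t ↦ Σ / (1 + t Σ)` when
`λ₁, λ₂ > 0`, and from its strict monotonicity (the whole budget goes to the one test with
positive weight) when only one of them is positive. -/

section PosteriorVariance

variable {S : ℝ}

lemma one_add_mul_pos (hS : 0 < S) {t : ℝ} (ht : 0 ≤ t) : 0 < 1 + t * S := by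
  positivity

lemma div_one_add_mul_le_self (hS : 0 < S) {t : ℝ} (ht : 0 ≤ t) : S / (1 + t * S) ≤ S :=
  div_le_self hS.le (by nlinarith)

lemma strictAntiOn_div_one_add_mul (hS : 0 < S) :
    StrictAntiOn (fun t => S / (1 + t * S)) (Set.Ici 0) := by
  intro a ha b _ hab
  exact div_lt_div_of_pos_left hS (one_add_mul_pos hS ha) (by nlinarith)

lemma two_mul_div_one_add_midpoint_mul_lt (hS : 0 < S) {a b : ℝ} (ha : 0 ≤ a) (hb : 0 ≤ b)
    (hab : a ≠ b) :
    2 * (S / (1 + (a + b) / 2 * S)) < S / (1 + a * S) + S / (1 + b * S) := by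
  have hx := one_add_mul_pos hS ha
  have hy := one_add_mul_pos hS hb
  have hm := one_add_mul_pos hS (by positivity : 0 ≤ (a + b) / 2)
  have hgap : 0 < ((a - b) * S) ^ 2 := by
    have := mul_ne_zero (sub_ne_zero.mpr hab) hS.ne'
    positivity
  rw [div_add_div _ _ hx.ne' hy.ne', ← mul_div_assoc, div_lt_div_iff₀ hm (mul_pos hx hy)]
  nlinarith

lemma two_mul_div_one_add_midpoint_mul_le (hS : 0 < S) {a b : ℝ} (ha : 0 ≤ a) (hb : 0 ≤ b) :
    2 * (S / (1 + (a + b) / 2 * S)) ≤ S / (1 + a * S) + S / (1 + b * S) := by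
  rcases eq_or_ne a b with rfl | hab
  · rw [add_self_div_two, two_mul]
  · exact (two_mul_div_one_add_midpoint_mul_lt hS ha hb hab).le

end PosteriorVariance

section Organization

variable {S1 S2 T aD1 aD2 β γ : ℝ}

lemma lam1_le_lam1 {β' : ℝ} (hββ' : β ≤ β') : lam1 aD1 aD2 β γ ≤ lam1 aD1 aD2 β' γ := by
  unfold lam1; nlinarith [sq_nonneg aD1]

lemma lam2_le_lam2 {β' : ℝ} (hββ' : β ≤ β') : lam2 aD1 aD2 β γ ≤ lam2 aD1 aD2 β' γ := by
  unfold lam2; nlinarith [sq_nonneg aD2]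

lemma lam1_swap : lam1 aD2 aD1 β (-γ) = lam2 aD1 aD2 β γ := by
  unfold lam1 lam2; ring

lemma lam2_swap : lam2 aD2 aD1 β (-γ) = lam1 aD1 aD2 β γ := by
  unfold lam1 lam2; ring

lemma Gfun_swap (τ : ℝ × ℝ) : Gfun S2 S1 aD2 aD1 β (-γ) τ.swap = Gfun S1 S2 aD1 aD2 β γ τ := by
  simp only [Gfun, lam1_swap, lam2_swap, Prod.fst_swap, Prod.snd_swap]
  ring

lemma Gfun_eq_add_VD (β' : ℝ) (τ : ℝ × ℝ) :
    Gfun S1 S2 aD1 aD2 β' γ τ = Gfun S1 S2 aD1 aD2 β γ τ + 2 * (β' - β) * VD S1 S2 aD1 aD2 τ := by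
  simp only [Gfun, VD, lam1, lam2]
  ring

lemma swap_mem_Talloc {τ : ℝ × ℝ} : τ.swap ∈ Talloc T ↔ τ ∈ Talloc T := by
  simp only [Talloc, Set.mem_ofPred_eq, Prod.fst_swap, Prod.snd_swap, add_comm τ.2]
  tauto

lemma midpoint_mem_Talloc {τ τ' : ℝ × ℝ} (hτ : τ ∈ Talloc T) (hτ' : τ' ∈ Talloc T) :
    ((τ.1 + τ'.1) / 2, (τ.2 + τ'.2) / 2) ∈ Talloc T := by
  obtain ⟨h1, h2, h⟩ := hτ
  obtain ⟨h1', h2', h'⟩ := hτ'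
  exact ⟨by dsimp only; linarith, by dsimp only; linarith, by dsimp only; linarith⟩

lemma IsEqAlloc.mem_Talloc (hT : 0 ≤ T) {τ : ℝ × ℝ} (h : IsEqAlloc S1 S2 T aD1 aD2 β γ τ) :
    τ ∈ Talloc T := by
  rcases h with ⟨-, -, rfl⟩ | ⟨-, hτ, -⟩
  · exact ⟨le_rfl, le_rfl, by simpa using hT⟩
  · exact hτ

lemma VD_zero_le (hS1 : 0 < S1) (hS2 : 0 < S2) {σ : ℝ × ℝ} (hσ : σ ∈ Talloc T) :
    VD S1 S2 aD1 aD2 (0, 0) ≤ VD S1 S2 aD1 aD2 σ := by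
  have e1 := div_one_add_mul_le_self hS1 hσ.1
  have e2 := div_one_add_mul_le_self hS2 hσ.2.1
  simp only [VD, zero_mul, add_zero, div_one]
  nlinarith [sq_nonneg aD1, sq_nonneg aD2]

lemma VD_le_of_isMaxOn {β' : ℝ} (hββ' : β < β') {s : Set (ℝ × ℝ)} {τ τ' : ℝ × ℝ}
    (hτ : τ ∈ s) (hτ' : τ' ∈ s) (hmax : IsMaxOn (Gfun S1 S2 aD1 aD2 β γ) s τ)
    (hmax' : IsMaxOn (Gfun S1 S2 aD1 aD2 β' γ) s τ') :
    VD S1 S2 aD1 aD2 τ ≤ VD S1 S2 aD1 aD2 τ' := by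
  have hA := isMaxOn_iff.mp hmax τ' hτ'
  have hB := isMaxOn_iff.mp hmax' τ hτ
  rw [Gfun_eq_add_VD (β := β) β' τ, Gfun_eq_add_VD (β := β) β' τ'] at hB
  exact le_of_mul_le_mul_left (by linarith) (by linarith : 0 < 2 * (β' - β))

lemma eq_zero_T_of_isMaxOn (hS1 : 0 < S1) (hS2 : 0 < S2) (hT : 0 ≤ T)
    (h1 : lam1 aD1 aD2 β γ ≤ 0) (h2 : 0 < lam2 aD1 aD2 β γ) {τ : ℝ × ℝ} (hτ : τ ∈ Talloc T)
    (hmax : IsMaxOn (Gfun S1 S2 aD1 aD2 β γ) (Talloc T) τ) : τ = (0, T) := by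
  obtain ⟨ht1, ht2, htT⟩ := hτ
  have hG := isMaxOn_iff.mp hmax (0, T) ⟨le_rfl, hT, by simp⟩
  simp only [Gfun, zero_mul, add_zero, div_one] at hG
  have hf1 := div_one_add_mul_le_self hS1 ht1
  have hf2 : S2 / (1 + T * S2) ≤ S2 / (1 + τ.2 * S2) :=
    (strictAntiOn_div_one_add_mul hS2).antitoneOn ht2 hT (by linarith)
  have hf2_eq : S2 / (1 + τ.2 * S2) = S2 / (1 + T * S2) := by
    nlinarith [mul_nonneg (neg_nonneg.mpr h1) (sub_nonneg.mpr hf1)]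
  have hτ2 : τ.2 = T := (strictAntiOn_div_one_add_mul hS2).injOn ht2 hT hf2_eq
  exact Prod.ext (by linarith) hτ2

lemma Gfun_isMaxOn_unique_of_pos (hS1 : 0 < S1) (hS2 : 0 < S2)
    (h1 : 0 < lam1 aD1 aD2 β γ) (h2 : 0 < lam2 aD1 aD2 β γ) {τ τ' : ℝ × ℝ}
    (hτ : τ ∈ Talloc T) (hτ' : τ' ∈ Talloc T)
    (hmax : IsMaxOn (Gfun S1 S2 aD1 aD2 β γ) (Talloc T) τ)
    (hmax' : IsMaxOn (Gfun S1 S2 aD1 aD2 β γ) (Talloc T) τ') : τ = τ' := by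
  by_contra hne
  have hGm := isMaxOn_iff.mp hmax _ (midpoint_mem_Talloc hτ hτ')
  have hGeq := le_antisymm (isMaxOn_iff.mp hmax' τ hτ) (isMaxOn_iff.mp hmax τ' hτ')
  have hc1 := two_mul_div_one_add_midpoint_mul_le hS1 hτ.1 hτ'.1
  have hc2 := two_mul_div_one_add_midpoint_mul_le hS2 hτ.2.1 hτ'.2.1
  simp only [Gfun] at hGm hGeq
  rcases not_and_or.mp (mt Prod.ext_iff.mpr hne) with h | h
  · have hs1 := two_mul_div_one_add_midpoint_mul_lt hS1 hτ.1 hτ'.1 h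
    nlinarith [mul_pos h1 (sub_pos.mpr hs1)]
  · have hs2 := two_mul_div_one_add_midpoint_mul_lt hS2 hτ.2.1 hτ'.2.1 h
    nlinarith [mul_pos h2 (sub_pos.mpr hs2)]

lemma isMaxOn_Gfun_swap {τ : ℝ × ℝ} (h : IsMaxOn (Gfun S1 S2 aD1 aD2 β γ) (Talloc T) τ) :
    IsMaxOn (Gfun S2 S1 aD2 aD1 β (-γ)) (Talloc T) τ.swap := by
  refine isMaxOn_iff.mpr fun σ hσ => ?_
  rw [← Prod.swap_swap σ, Gfun_swap, Gfun_swap]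
  exact isMaxOn_iff.mp h σ.swap (swap_mem_Talloc.mpr hσ)

lemma Gfun_isMaxOn_unique (hS1 : 0 < S1) (hS2 : 0 < S2) (hT : 0 ≤ T)
    (hlam : ¬(lam1 aD1 aD2 β γ ≤ 0 ∧ lam2 aD1 aD2 β γ ≤ 0)) {τ τ' : ℝ × ℝ}
    (hτ : τ ∈ Talloc T) (hτ' : τ' ∈ Talloc T)
    (hmax : IsMaxOn (Gfun S1 S2 aD1 aD2 β γ) (Talloc T) τ)
    (hmax' : IsMaxOn (Gfun S1 S2 aD1 aD2 β γ) (Talloc T) τ') : τ = τ' := by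
  rcases le_or_gt (lam1 aD1 aD2 β γ) 0 with h1 | h1 <;>
    rcases le_or_gt (lam2 aD1 aD2 β γ) 0 with h2 | h2
  · exact absurd ⟨h1, h2⟩ hlam
  · rw [eq_zero_T_of_isMaxOn hS1 hS2 hT h1 h2 hτ hmax,
      eq_zero_T_of_isMaxOn hS1 hS2 hT h1 h2 hτ' hmax']
  · rw [← lam2_swap] at h1
    rw [← lam1_swap] at h2
    apply Prod.swap_injective
    rw [eq_zero_T_of_isMaxOn hS2 hS1 hT h2 h1 (swap_mem_Talloc.mpr hτ) (isMaxOn_Gfun_swap hmax),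
      eq_zero_T_of_isMaxOn hS2 hS1 hT h2 h1 (swap_mem_Talloc.mpr hτ') (isMaxOn_Gfun_swap hmax')]
  · exact Gfun_isMaxOn_unique_of_pos hS1 hS2 h1 h2 hτ hτ' hmax hmax'

end Organization

theorem stmt_9_general
    (S1 S2 T aD1 aD2 γ β β' : ℝ)
    (hS1 : 0 < S1) (hS2 : 0 < S2) (hT : 0 < T)
    (hββ' : β ≤ β') :
    ∀ τ τ', IsEqAlloc S1 S2 T aD1 aD2 β γ τ → IsEqAlloc S1 S2 T aD1 aD2 β' γ τ' →
      VD S1 S2 aD1 aD2 τ ≤ VD S1 S2 aD1 aD2 τ' := by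
  intro τ τ' hτ hτ'
  have hτ'T := hτ'.mem_Talloc hT.le
  rcases hτ with ⟨-, -, rfl⟩ | ⟨hlam, hτT, hmax⟩
  · exact VD_zero_le hS1 hS2 hτ'T
  rcases hτ' with ⟨h1', h2', -⟩ | ⟨-, -, hmax'⟩
  · exact absurd ⟨(lam1_le_lam1 hββ').trans h1', (lam2_le_lam2 hββ').trans h2'⟩ hlam
  rw [← isMaxOn_iff] at hmax hmax'
  rcases hββ'.eq_or_lt with rfl | hlt
  · rw [Gfun_isMaxOn_unique hS1 hS2 hT.le hlam hτT hτ'T hmax hmax']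
  · exact VD_le_of_isMaxOn hlt hτT hτ'T hmax hmax'

/-- Proposition 3 of the paper.  For a fixed distortion `γ`, the
manager's expected equilibrium payoff is weakly increasing in the analyst's
sensitivity `β`. -/
theorem stmt_9
    (S1 S2 T aD1 aD2 γ β β' : ℝ)
    (hS1 : 0 < S1) (hS2 : 0 < S2) (hT : 0 < T)
    (hD1 : 0 < aD1) (hD2 : 0 < aD2)
    (hβ0 : 0 ≤ β) (hββ' : β ≤ β') (hγ : γ ∈ Gam aD1 aD2 β) :
    ∀ τ τ', IsEqAlloc S1 S2 T aD1 aD2 β γ τ → IsEqAlloc S1 S2 T aD1 aD2 β' γ τ' →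
      VD S1 S2 aD1 aD2 τ ≤ VD S1 S2 aD1 aD2 τ' :=
  stmt_9_general S1 S2 T aD1 aD2 γ β β' hS1 hS2 hT hββ'
end
end
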